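/- Let G be a simple graph, Q a set of vertices of G, and let |Q,Q̄| denote the number of edges with one endpoint in Q and one in the complement Q̄ of Q. Then the sum of degrees of vertices in Q equals |Q|(|Q|-1) plus the sum over vertices p in Q̄ of min{|Q|, deg(p)} if and only if (1) Q is a clique, (2) every vertex in Q̄ of degree less than |Q| has all of its neighbors in Q, and (3) every vertex in Q̄ of degree at least |Q| is adjacent to every vertex of Q. -/

import Mathlib

open SimpleGraph Finset

/-- `s` is an independent set in `G`. -/
def IsIndepSet {α : Type*} (G : SimpleGraph α) (s : Set α) : Prop :=
  s.Pairwise fun a b => ¬ G.Adj a b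

/-- `(G, A, B)` is a splitted graph: `A` an independent set and `B` a clique
partitioning the vertex set of `G`. -/
def IsSplitted {α : Type*} (G : SimpleGraph α) (A B : Set α) : Prop :=
  _root_.IsIndepSet G A ∧ G.IsClique B ∧ A ∪ B = Set.univ ∧ Disjoint A B

/-- `G` is a split graph. -/
def IsSplitGraph {α : Type*} (G : SimpleGraph α) : Prop :=
  ∃ A B : Set α, IsSplitted G A B

/-- Tyshkevich composition `(G, A, B) ∘ H`: the disjoint union of `G` and `H`
together with all edges between the clique `B` and the vertices of `H`. -/
def comp {α β : Type*} (G : SimpleGraph α) (B : Set α) (H : SimpleGraph β) :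
    SimpleGraph (α ⊕ β) where
  Adj x y :=
    match x, y with
    | Sum.inl a, Sum.inl a' => G.Adj a a'
    | Sum.inr b, Sum.inr b' => H.Adj b b'
    | Sum.inl a, Sum.inr _ => a ∈ B
    | Sum.inr _, Sum.inl a => a ∈ B
  symm := by
    refine ⟨?_⟩; rintro (a | b) (a' | b') h
    · exact G.adj_symm h
    · exact h
    · exact h
    · exact H.adj_symm h
  loopless := by
    refine ⟨?_⟩; rintro (a | b) h
    · exact G.irrefl h
    · exact H.irrefl h

/-- The degree of a vertex, as the cardinality of its neighborhood. -/
noncomputable def deg {α : Type*} (G : SimpleGraph α) (v : α) : ℕ :=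
  (G.neighborSet v).ncard

/-- The disjoint union of two edges. -/
def twoK2 : SimpleGraph (Fin 4) :=
  SimpleGraph.fromRel fun a b => (a.val = 0 ∧ b.val = 1) ∨ (a.val = 2 ∧ b.val = 3)

/-- The 4-cycle. -/
def cycle4 : SimpleGraph (Fin 4) :=
  SimpleGraph.fromRel fun a b =>
    (a.val = 0 ∧ b.val = 1) ∨ (a.val = 1 ∧ b.val = 2) ∨
    (a.val = 2 ∧ b.val = 3) ∨ (a.val = 3 ∧ b.val = 0)

/-- The path on four vertices. -/
def path4 : SimpleGraph (Fin 4) :=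
  SimpleGraph.fromRel fun a b =>
    (a.val = 0 ∧ b.val = 1) ∨ (a.val = 1 ∧ b.val = 2) ∨ (a.val = 2 ∧ b.val = 3)

/-- The 5-cycle. -/
def cycle5 : SimpleGraph (Fin 5) :=
  SimpleGraph.fromRel fun a b =>
    (a.val = 0 ∧ b.val = 1) ∨ (a.val = 1 ∧ b.val = 2) ∨
    (a.val = 2 ∧ b.val = 3) ∨ (a.val = 3 ∧ b.val = 4) ∨ (a.val = 4 ∧ b.val = 0)

/-!
Counting, for every vertex, its neighbours inside `Q`, the degree sum over `Q` equals
`∑_{q ∈ Q} |N(q) ∩ Q| + ∑_{p ∉ Q} |N(p) ∩ Q|`: the edges leaving `Q` are counted from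
their endpoint outside `Q`. Termwise `|N(q) ∩ Q| ≤ |Q| - 1` and `|N(p) ∩ Q| ≤ min |Q| (deg p)`,
so the equality holds iff every term is extremal. For `q ∈ Q` this says that `q` is adjacent to
the rest of `Q`; for `p ∉ Q` it says `N(p) ⊆ Q` or `Q ⊆ N(p)`, according as `deg p < |Q|` or
not.
-/

lemma deg_eq_degree {V : Type*} (G : SimpleGraph V) (v : V) [Fintype (G.neighborSet v)] :
    deg G v = G.degree v := by
  rw [deg, ← card_neighborFinset_eq_degree, neighborFinset, Set.ncard_eq_toFinset_card']

namespace Finset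

variable {α : Type*} {s t : Finset α}

theorem card_eq_card_iff_eq_of_subset (h : s ⊆ t) : #s = #t ↔ s = t :=
  ⟨fun hst => eq_of_subset_of_card_le h hst.ge, congrArg card⟩

variable [DecidableEq α]

theorem card_inter_eq_right_iff : #(s ∩ t) = #t ↔ t ⊆ s := by
  rw [card_eq_card_iff_eq_of_subset inter_subset_right, inter_eq_right]

theorem card_inter_eq_left_iff : #(s ∩ t) = #s ↔ s ⊆ t := by
  rw [inter_comm, card_inter_eq_right_iff]

theorem card_inter_eq_min_iff :
    #(s ∩ t) = min #s #t ↔ (#t < #s → t ⊆ s) ∧ (#s ≤ #t → s ⊆ t) := by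
  rcases lt_or_ge #t #s with hts | hst
  · simp [min_eq_right hts.le, card_inter_eq_right_iff, hts, not_le.2 hts]
  · simp [card_inter_eq_left_iff, hst, not_lt.2 hst]

end Finset

namespace SimpleGraph

variable {V : Type*} (G : SimpleGraph V) [DecidableRel G.Adj] (s : Finset V) (v : V)

theorem filter_adj_subset_erase [DecidableEq V] : {w ∈ s | G.Adj v w} ⊆ s.erase v := by
  intro w hw
  rw [mem_filter] at hw
  exact mem_erase.2 ⟨hw.2.ne', hw.1⟩

theorem card_filter_adj_le_card_sub_one [DecidableEq V] (hv : v ∈ s) :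
    #{w ∈ s | G.Adj v w} ≤ #s - 1 :=
  (card_le_card (G.filter_adj_subset_erase s v)).trans_eq (card_erase_of_mem hv)

theorem isClique_iff_forall_card_filter_adj [DecidableEq V] :
    G.IsClique s ↔ ∀ v ∈ s, #{w ∈ s | G.Adj v w} = #s - 1 := by
  refine forall₂_congr fun v hv => ?_
  have hsub := G.filter_adj_subset_erase s v
  rw [← card_erase_of_mem hv, card_eq_card_iff_eq_of_subset hsub, Subset.antisymm_iff,
    and_iff_right hsub, subset_iff]
  simp only [mem_erase, mem_filter, and_imp]
  exact forall_congr' fun w => ⟨fun h hne hw => ⟨hw, h hw hne.symm⟩,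
    fun h hw hne => (h hne.symm hw).2⟩

variable [Fintype V]

theorem filter_adj_subset_neighborFinset : {w ∈ s | G.Adj v w} ⊆ G.neighborFinset v := by
  intro w hw
  simpa using (mem_filter.1 hw).2

theorem card_filter_adj_le_min : #{w ∈ s | G.Adj v w} ≤ min #s (G.degree v) :=
  le_min (card_filter_le _ _)
    ((card_le_card (G.filter_adj_subset_neighborFinset s v)).trans_eq
      (G.card_neighborFinset_eq_degree v))

theorem card_filter_adj_eq_min_iff [DecidableEq V] :
    #{w ∈ s | G.Adj v w} = min #s (G.degree v) ↔
      (G.degree v < #s → ∀ w, G.Adj v w → w ∈ s) ∧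
        (#s ≤ G.degree v → ∀ w ∈ s, G.Adj v w) := by
  have h : {w ∈ s | G.Adj v w} = s ∩ G.neighborFinset v := by ext; simp
  rw [h, ← card_neighborFinset_eq_degree, card_inter_eq_min_iff]
  simp only [subset_iff, mem_neighborFinset]

variable [DecidableEq V]

theorem degree_eq_card_filter_adj_add_compl :
    G.degree v = #{w ∈ s | G.Adj v w} + #{w ∈ sᶜ | G.Adj v w} := by
  rw [← card_neighborFinset_eq_degree, neighborFinset_eq_filter,
    ← card_filter_add_card_filter_not (· ∈ s)]
  congr 1 <;> congr 1 <;> ext <;> simp [and_comm]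

theorem sum_degree_eq_sum_card_filter_adj :
    ∑ v ∈ s, G.degree v =
      ∑ v ∈ s, #{w ∈ s | G.Adj v w} + ∑ v ∈ sᶜ, #{w ∈ s | G.Adj v w} := by
  have hswap : ∑ v ∈ s, #{w ∈ sᶜ | G.Adj v w} = ∑ v ∈ sᶜ, #{w ∈ s | G.Adj v w} := by
    simpa only [bipartiteAbove, bipartiteBelow, G.adj_comm] using
      sum_card_bipartiteAbove_eq_sum_card_bipartiteBelow (s := s) (t := sᶜ) (r := G.Adj)
  rw [← hswap, ← sum_add_distrib]
  exact sum_congr rfl fun v _ => G.degree_eq_card_filter_adj_add_compl s v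

end SimpleGraph

/-- The Erdős–Gallai style equality for a vertex set `Q` holds iff
`Q` is a clique, every low-degree vertex outside `Q` has all its neighbors in `Q`,
and every high-degree vertex outside `Q` is adjacent to all of `Q`. -/
theorem stmt0 {V : Type*} [Fintype V] [DecidableEq V] (G : SimpleGraph V) (Q : Finset V) :
    (∑ q ∈ Q, deg G q =
        Q.card * (Q.card - 1) + ∑ p ∈ Qᶜ, min Q.card (deg G p)) ↔
      (G.IsClique ↑Q ∧
        (∀ p ∉ Q, deg G p < Q.card → ∀ w, G.Adj p w → w ∈ Q) ∧
        (∀ p ∉ Q, Q.card ≤ deg G p → ∀ q ∈ Q, G.Adj p q)) := by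
  classical
  simp_rw [deg_eq_degree, G.sum_degree_eq_sum_card_filter_adj Q]
  have hin : ∀ v ∈ Q, #{w ∈ Q | G.Adj v w} ≤ #Q - 1 := fun v hv =>
    G.card_filter_adj_le_card_sub_one Q v hv
  have hout : ∀ v ∈ Qᶜ, #{w ∈ Q | G.Adj v w} ≤ min #Q (G.degree v) := fun v _ =>
    G.card_filter_adj_le_min Q v
  rw [← smul_eq_mul, ← sum_const, add_eq_add_iff_eq_and_eq (sum_le_sum hin) (sum_le_sum hout),
    sum_eq_sum_iff_of_le hin, sum_eq_sum_iff_of_le hout, ← isClique_iff_forall_card_filter_adj]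
  simp only [card_filter_adj_eq_min_iff, mem_compl, forall_and]
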